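/- arXiv:2511.16873 — 5 statements merged into one kernel-verified Lean document; each statement's English description precedes it below -/
import Mathlib

section
/- Let F be a field of characteristic not 2, E = F(√τ) a quadratic extension, and G = SL₂(E) with the involution θ given by applying the nontrivial Galois automorphism of E/F to each matrix entry. Then an element g ∈ SL₂(E) satisfies g·θ(g) = 1 if and only if g can be written in the form [[a, b√τ],[c√τ, ā]] with a ∈ E, b, c ∈ F, and a·ā − b·c·τ = 1, where ā denotes the Galois conjugate of a. -/
open Matrix

/-!
Since `det g = 1`, the equation `g · θ(g) = 1` says `θ(g) = adj g`, i.e. entrywise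
`σ g₀₀ = g₁₁`, `σ g₀₁ = -g₀₁`, `σ g₁₀ = -g₁₀` (the fourth condition follows since `σ` is an
involution). Writing `x = p + q s`, the elements with `σ x = -x` are exactly `F · s` because
`2 ≠ 0` in `F`, and `det g = 1` becomes `a ā - bcτ = 1`.
-/

theorem Matrix.mul_eq_one_iff_eq_adjugate {n R : Type*} [Fintype n] [DecidableEq n] [CommRing R]
    {g h : Matrix n n R} (hg : g.det = 1) : g * h = 1 ↔ h = g.adjugate := by
  constructor
  · intro hgh
    calc h = (g.adjugate * g) * h := by rw [adjugate_mul, hg, one_smul, Matrix.one_mul]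
      _ = g.adjugate := by rw [Matrix.mul_assoc, hgh, Matrix.mul_one]
  · rintro rfl
    rw [mul_adjugate, hg, one_smul]

theorem Matrix.map_eq_adjugate_fin_two_iff {R : Type*} [CommRing R] (f : R → R)
    (g : Matrix (Fin 2) (Fin 2) R) :
    g.map f = g.adjugate ↔
      f (g 0 0) = g 1 1 ∧ f (g 0 1) = -g 0 1 ∧ f (g 1 0) = -g 1 0 ∧ f (g 1 1) = g 0 0 := by
  rw [adjugate_fin_two, ← Matrix.ext_iff, Fin.forall_fin_two, Fin.forall_fin_two,
    Fin.forall_fin_two]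
  simp [and_assoc]

section QuadraticExtension

variable {F E : Type*} [Field F] [Field E] [Algebra F E] {s : E} {σ : E ≃ₐ[F] E}

theorem map_algebraMap_mul_eq_neg (hσ : σ s = -s) (b : F) :
    σ (algebraMap F E b * s) = -(algebraMap F E b * s) := by
  rw [map_mul, σ.commutes, hσ, mul_neg]

theorem involutive_of_map_eq_neg
    (hbasis : ∀ x : E, ∃ a b : F, x = algebraMap F E a + algebraMap F E b * s)
    (hσ : σ s = -s) : Function.Involutive σ := by
  intro x
  obtain ⟨a, b, rfl⟩ := hbasis x
  rw [map_add, σ.commutes, map_algebraMap_mul_eq_neg hσ, map_add, map_neg, σ.commutes,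
    map_algebraMap_mul_eq_neg hσ, neg_neg]

theorem exists_eq_algebraMap_mul_of_map_eq_neg (h2 : (2 : F) ≠ 0)
    (hbasis : ∀ x : E, ∃ a b : F, x = algebraMap F E a + algebraMap F E b * s)
    (hσ : σ s = -s) {x : E} (hx : σ x = -x) : ∃ b : F, x = algebraMap F E b * s := by
  obtain ⟨a, b, rfl⟩ := hbasis x
  rw [map_add, σ.commutes, map_algebraMap_mul_eq_neg hσ] at hx
  have h2a : algebraMap F E (2 * a) = 0 := by
    rw [map_mul, map_ofNat]
    linear_combination hx
  have ha : a = 0 := by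
    simpa [h2] using (map_eq_zero_iff _ (algebraMap F E).injective).mp h2a
  exact ⟨b, by rw [ha, map_zero, zero_add]⟩

end QuadraticExtension

theorem stmt1_general {F E : Type*} [Field F] [Field E] [Algebra F E]
    (h2 : (2 : F) ≠ 0) (τ : F)
    (s : E) (hs : s ^ 2 = algebraMap F E τ)
    (hbasis : ∀ x : E, ∃ a b : F, x = algebraMap F E a + algebraMap F E b * s)
    (σ : E ≃ₐ[F] E) (hσ : σ s = -s)
    (g : Matrix (Fin 2) (Fin 2) E) (hg : g.det = 1) :
    g * g.map σ = 1 ↔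
      ∃ (a : E) (b c : F),
        g = !![a, algebraMap F E b * s; algebraMap F E c * s, σ a] ∧
        a * σ a - algebraMap F E (b * c * τ) = 1 := by
  rw [mul_eq_one_iff_eq_adjugate hg, map_eq_adjugate_fin_two_iff]
  constructor
  · rintro ⟨h00, h01, h10, -⟩
    obtain ⟨b, hb⟩ := exists_eq_algebraMap_mul_of_map_eq_neg h2 hbasis hσ h01
    obtain ⟨c, hc⟩ := exists_eq_algebraMap_mul_of_map_eq_neg h2 hbasis hσ h10
    refine ⟨g 0 0, b, c, ?_, ?_⟩
    · rw [← hb, ← hc, h00]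
      exact eta_fin_two g
    · rw [det_fin_two, hb, hc, ← h00] at hg
      rw [map_mul, map_mul]
      linear_combination hg + algebraMap F E b * algebraMap F E c * hs
  · rintro ⟨a, b, c, rfl, -⟩
    simp [map_algebraMap_mul_eq_neg hσ, involutive_of_map_eq_neg hbasis hσ _]

/-- For `E = F(√τ)` quadratic with Galois involution `σ` and `θ` entrywise
conjugation on `SL₂(E)`, an element `g` with `det g = 1` satisfies `g · θ(g) = 1` iff
`g = [[a, b√τ],[c√τ, ā]]` with `a ∈ E`, `b, c ∈ F` and `a·ā − bcτ = 1`. -/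
theorem stmt1 {F E : Type*} [Field F] [Field E] [Algebra F E]
    (h2 : (2 : F) ≠ 0) (τ : F) (hτ : ∀ a : F, a ^ 2 ≠ τ)
    (s : E) (hs : s ^ 2 = algebraMap F E τ)
    (hbasis : ∀ x : E, ∃ a b : F, x = algebraMap F E a + algebraMap F E b * s)
    (σ : E ≃ₐ[F] E) (hσ : σ s = -s)
    (g : Matrix (Fin 2) (Fin 2) E) (hg : g.det = 1) :
    g * g.map σ = 1 ↔
      ∃ (a : E) (b c : F),
        g = !![a, algebraMap F E b * s; algebraMap F E c * s, σ a] ∧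
        a * σ a - algebraMap F E (b * c * τ) = 1 :=
  stmt1_general h2 τ s hs hbasis σ hσ g hg
end

section
/- Let E = F(√τ) be a quadratic extension of a field F of characteristic not 2, with conjugation x ↦ x̄. Let η = [[x, √τ·a],[0, x̄]] with x ∈ E, x·x̄ = 1, a ∈ F. Suppose y ∈ Eˣ satisfies x = y/ȳ, and set γ = [[y,0],[0,y⁻¹]] and n₁ = [[1, √τ·a/(2yȳ)],[0,1]]. Then γ·n₁·θ(γ·n₁)⁻¹ = η, where θ is entrywise conjugation. -/
open Matrix

section UpperTriangular

variable {K : Type*} [Field K]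

lemma diag_mul_unipotent_fin_two (y c : K) :
    !![y, 0; 0, y⁻¹] * !![1, c; 0, 1] = !![y, y * c; 0, y⁻¹] := by
  simp

lemma inv_upperTriangular_fin_two {u : K} (hu : u ≠ 0) (b : K) :
    !![u, b; 0, u⁻¹]⁻¹ = !![u⁻¹, -b; 0, u] := by
  refine inv_eq_right_inv ?_
  simp [hu, one_fin_two, mul_comm]

lemma mul_inv_map_upperTriangular_fin_two {G : Type*} [FunLike G K K] [RingHomClass G K K]
    (σ : G) {y : K} (hy : y ≠ 0) (c : K) :
    !![y, y * c; 0, y⁻¹] * (!![y, y * c; 0, y⁻¹].map σ)⁻¹ =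
      !![y / σ y, y * σ y * (c - σ c); 0, σ y / y] := by
  have hσy : σ y ≠ 0 := (map_ne_zero σ).mpr hy
  have hmap : !![y, y * c; 0, y⁻¹].map σ = !![σ y, σ y * σ c; 0, (σ y)⁻¹] := by
    ext i j; fin_cases i <;> fin_cases j <;> simp
  rw [hmap, inv_upperTriangular_fin_two hσy]
  ext i j; fin_cases i <;> fin_cases j <;> simp [div_eq_mul_inv] <;> ring

end UpperTriangular

theorem stmt6_general {F E : Type*} [Field F] [Field E] [Algebra F E]
    (h2 : (2 : E) ≠ 0)
    (s : E)
    (σ : E ≃ₐ[F] E) (hσ : σ s = -s)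
    (x y : E) (hy : y ≠ 0) (hnorm : x * σ x = 1) (hxy : x = y / σ y)
    (a : F) :
    (!![y, 0; 0, y⁻¹] : Matrix (Fin 2) (Fin 2) E) *
        !![1, s * algebraMap F E a / (2 * (y * σ y)); 0, 1] *
        (((!![y, 0; 0, y⁻¹] : Matrix (Fin 2) (Fin 2) E) *
          !![1, s * algebraMap F E a / (2 * (y * σ y)); 0, 1]).map σ)⁻¹ =
      !![x, s * algebraMap F E a; 0, σ x] := by
  set c := s * algebraMap F E a / (2 * (y * σ y)) with hc
  have hσy : σ y ≠ 0 := (map_ne_zero σ).mpr hy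
  have hσσy : σ (σ y) = y := by
    have h : y / σ (σ y) = 1 := by
      rw [← div_mul_div_cancel₀ hσy, ← map_div₀, ← hxy, hnorm]
    exact ((div_eq_one_iff_eq ((map_ne_zero σ).mpr hσy)).mp h).symm
  have hσx : σ x = σ y / y := by rw [hxy, map_div₀, hσσy]
  have hσc : σ c = -c := by
    simp only [hc, map_div₀, map_mul, map_ofNat, hσ, AlgEquiv.commutes, hσσy]
    ring
  have hcorner : y * σ y * (c - -c) = s * algebraMap F E a := by
    rw [hc]
    field_simp
    ring
  rw [diag_mul_unipotent_fin_two, mul_inv_map_upperTriangular_fin_two σ hy, hσc, hcorner, hσx,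
    ← hxy]

/-- With `η = [[x, √τ·a],[0, x̄]]`, `x·x̄ = 1`, `x = y/ȳ`,
`γ = diag(y, y⁻¹)` and `n₁ = [[1, √τ·a/(2yȳ)],[0,1]]`, one has
`γ·n₁·θ(γ·n₁)⁻¹ = η`, where `θ` is entrywise Galois conjugation. -/
theorem stmt6 {F E : Type*} [Field F] [Field E] [Algebra F E]
    (h2 : (2 : E) ≠ 0) (τ : F) (hτ : ∀ a : F, a ^ 2 ≠ τ)
    (s : E) (hs : s ^ 2 = algebraMap F E τ)
    (σ : E ≃ₐ[F] E) (hσ : σ s = -s)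
    (x y : E) (hy : y ≠ 0) (hnorm : x * σ x = 1) (hxy : x = y / σ y)
    (a : F) :
    (!![y, 0; 0, y⁻¹] : Matrix (Fin 2) (Fin 2) E) *
        !![1, s * algebraMap F E a / (2 * (y * σ y)); 0, 1] *
        (((!![y, 0; 0, y⁻¹] : Matrix (Fin 2) (Fin 2) E) *
          !![1, s * algebraMap F E a / (2 * (y * σ y)); 0, 1]).map σ)⁻¹ =
      !![x, s * algebraMap F E a; 0, σ x] :=
  stmt6_general h2 s σ hσ x y hy hnorm hxy a
end

section
/- Let E = F(√τ) (char F ≠ 2) with entrywise conjugation θ on M₂(E). The set 𝔬⁺ = {g ∈ SL₂(E) : g·θ(g) = 1 and tr(g) = 2} equals {[[1 + √τ·a, √τ·b],[√τ·c, 1 − √τ·a]] : a, b, c ∈ F, a² + bc = 0}. In particular, the map sending such g to the matrix [[a,b],[c,−a]] ∈ 𝔰𝔩₂(F) is a bijection from 𝔬⁺ onto the nilpotent cone {M ∈ 𝔰𝔩₂(F) : M² = 0}. -/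
/-! Write `g = 1 + N`. For a `2 × 2` matrix, `det g = 1` and `tr g = 2` say `tr N = 0` and
`N² = 0`, and then Cayley–Hamilton gives `g⁻¹ = adj g = 2 - g = 1 - N`, so `g · θ(g) = 1` says
`θ(N) = -N`. As `char F ≠ 2`, the `θ`-anti-invariant elements of `E = F ⊕ F·√τ` are exactly
`F·√τ`, so `N = √τ · M` for a unique `M` over `F`, again with `tr M = 0` and `M² = 0`, i.e.
`M = [[a, b], [c, -a]]` with `a² + bc = 0`. -/

open Matrix

namespace Matrix

variable {R : Type*} [CommRing R]

theorem mul_self_fin_two_of_trace_eq_zero {N : Matrix (Fin 2) (Fin 2) R} (h : N.trace = 0) :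
    N * N = -N.det • 1 := by
  have h11 : N 1 1 = -N 0 0 := by rw [trace_fin_two] at h; linear_combination h
  ext i j
  fin_cases i <;> fin_cases j <;> simp [mul_apply, det_fin_two, h11] <;> ring

theorem mul_self_eq_zero_iff_det_eq_zero_of_trace_eq_zero {N : Matrix (Fin 2) (Fin 2) R}
    (h : N.trace = 0) : N * N = 0 ↔ N.det = 0 := by
  rw [mul_self_fin_two_of_trace_eq_zero h]
  exact ⟨fun h0 => by simpa using congrFun₂ h0 0 0, fun h0 => by simp [h0]⟩

theorem adjugate_fin_two_eq_trace_smul_sub (g : Matrix (Fin 2) (Fin 2) R) :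
    g.adjugate = g.trace • 1 - g := by
  ext i j
  fin_cases i <;> fin_cases j <;> simp [adjugate_fin_two, trace_fin_two]

theorem det_one_add_fin_two (N : Matrix (Fin 2) (Fin 2) R) :
    (1 + N).det = 1 + N.trace + N.det := by
  simp only [det_fin_two, trace_fin_two, add_apply, one_apply_eq, ne_eq, zero_ne_one, one_ne_zero,
    not_false_eq_true, one_apply_ne, zero_add]
  ring

theorem trace_one_add_fin_two (N : Matrix (Fin 2) (Fin 2) R) : (1 + N).trace = 2 + N.trace := by
  rw [trace_add, trace_one, Fintype.card_fin, Nat.cast_ofNat]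

theorem det_one_add_eq_one_and_trace_eq_two_iff (N : Matrix (Fin 2) (Fin 2) R) :
    (1 + N).det = 1 ∧ (1 + N).trace = 2 ↔ N.trace = 0 ∧ N * N = 0 := by
  rw [det_one_add_fin_two, trace_one_add_fin_two, add_eq_left]
  constructor
  · rintro ⟨hdet, htr⟩
    rw [htr, add_zero, add_eq_left] at hdet
    exact ⟨htr, (mul_self_eq_zero_iff_det_eq_zero_of_trace_eq_zero htr).2 hdet⟩
  · rintro ⟨htr, hsq⟩
    rw [(mul_self_eq_zero_iff_det_eq_zero_of_trace_eq_zero htr).1 hsq, htr]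
    exact ⟨by ring, rfl⟩

theorem mul_eq_one_iff_eq_adjugate_of_det_eq_one {n : Type*} [Fintype n] [DecidableEq n]
    {g X : Matrix n n R} (hg : g.det = 1) : g * X = 1 ↔ X = g.adjugate := by
  constructor
  · intro h
    rw [← inv_eq_right_inv h, inv_def, hg, Ring.inverse_one, one_smul]
  · rintro rfl
    rw [mul_adjugate, hg, one_smul]

theorem adjugate_one_add_of_trace_eq_two {N : Matrix (Fin 2) (Fin 2) R}
    (h : (1 + N).trace = 2) : (1 + N).adjugate = 1 - N := by
  rw [adjugate_fin_two_eq_trace_smul_sub, h, two_smul]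
  abel

theorem symmetricSpace_fiber_one_add_iff {S : Type*} [FunLike S R R] [RingHomClass S R R] (σ : S)
    (N : Matrix (Fin 2) (Fin 2) R) :
    ((1 + N).det = 1 ∧ (1 + N) * (1 + N).map σ = 1 ∧ (1 + N).trace = 2) ↔
      (N.trace = 0 ∧ N * N = 0 ∧ N.map σ = -N) := by
  have hmap : (1 + N).map σ = 1 + N.map σ := by
    rw [Matrix.map_add _ (map_add σ), Matrix.map_one _ (map_zero σ) (map_one σ)]
  have hmul_map (hdet : (1 + N).det = 1) (htr : (1 + N).trace = 2) :
      (1 + N) * (1 + N).map σ = 1 ↔ N.map σ = -N := by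
    rw [mul_eq_one_iff_eq_adjugate_of_det_eq_one hdet, adjugate_one_add_of_trace_eq_two htr, hmap,
      sub_eq_add_neg, add_right_inj]
  constructor
  · rintro ⟨hdet, hmul, htr⟩
    obtain ⟨htr0, hsq⟩ := (det_one_add_eq_one_and_trace_eq_two_iff N).1 ⟨hdet, htr⟩
    exact ⟨htr0, hsq, (hmul_map hdet htr).1 hmul⟩
  · rintro ⟨htr0, hsq, hanti⟩
    obtain ⟨hdet, htr⟩ := (det_one_add_eq_one_and_trace_eq_two_iff N).2 ⟨htr0, hsq⟩
    exact ⟨hdet, (hmul_map hdet htr).2 hanti, htr⟩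

theorem trace_eq_zero_and_mul_self_eq_zero_fin_two_iff (M : Matrix (Fin 2) (Fin 2) R) :
    (M.trace = 0 ∧ M * M = 0) ↔ ∃ a b c : R, a ^ 2 + b * c = 0 ∧ M = !![a, b; c, -a] := by
  constructor
  · rintro ⟨htr, hsq⟩
    rw [mul_self_eq_zero_iff_det_eq_zero_of_trace_eq_zero htr, det_fin_two] at hsq
    have h11 : M 1 1 = -M 0 0 := by rw [trace_fin_two] at htr; linear_combination htr
    refine ⟨M 0 0, M 0 1, M 1 0, by linear_combination -hsq + M 0 0 * h11, ?_⟩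
    rw [← h11]
    exact eta_fin_two M
  · rintro ⟨a, b, c, habc, rfl⟩
    have htr : (!![a, b; c, -a]).trace = 0 := by rw [trace_fin_two_of, add_neg_cancel]
    refine ⟨htr, (mul_self_eq_zero_iff_det_eq_zero_of_trace_eq_zero htr).2 ?_⟩
    rw [det_fin_two_of]
    linear_combination -habc

end Matrix

section QuadraticExtension

variable {F E : Type*} [Field F] [Field E] [Algebra F E] {s : E} {σ : E ≃ₐ[F] E}

theorem exists_eq_smul_map_of_map_eq_neg {m n : Type*} (h2 : (2 : F) ≠ 0)
    (hbasis : ∀ x : E, ∃ a b : F, x = algebraMap F E a + algebraMap F E b * s)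
    (hσ : σ s = -s) {N : Matrix m n E} (hN : N.map σ = -N) :
    ∃ M : Matrix m n F, N = s • M.map (algebraMap F E) := by
  have hentry (i : m) (j : n) : ∃ b : F, N i j = algebraMap F E b * s :=
    exists_eq_algebraMap_mul_of_map_eq_neg h2 hbasis hσ (congrFun₂ hN i j)
  choose M hM using hentry
  exact ⟨Matrix.of M, by ext i j; simp [hM, mul_comm]⟩

theorem map_smul_map_algebraMap_eq_neg {m n : Type*} (hσ : σ s = -s) (M : Matrix m n F) :
    (s • M.map (algebraMap F E)).map σ = -(s • M.map (algebraMap F E)) := by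
  ext i j
  simp [hσ]

theorem trace_eq_zero_and_mul_self_eq_zero_smul_map_iff {n : Type*} [Fintype n] [DecidableEq n]
    (hs0 : s ≠ 0) (M : Matrix n n F) :
    ((s • M.map (algebraMap F E)).trace = 0 ∧
        (s • M.map (algebraMap F E)) * (s • M.map (algebraMap F E)) = 0) ↔
      (M.trace = 0 ∧ M * M = 0) := by
  have hmap_eq_zero {X : Matrix n n F} : X.map (algebraMap F E) = 0 ↔ X = 0 :=
    (map_injective (algebraMap F E).injective).eq_iff' (Matrix.map_zero _ (map_zero _))
  rw [trace_smul, ← AddMonoidHom.map_trace, smul_mul_smul_comm, ← Matrix.map_mul, smul_eq_zero,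
    smul_eq_zero, hmap_eq_zero, map_eq_zero_iff _ (algebraMap F E).injective]
  simp [hs0]

theorem one_add_smul_map_of_fin_two (a b c : F) :
    1 + s • (!![a, b; c, -a]).map (algebraMap F E) =
      !![1 + s * algebraMap F E a, s * algebraMap F E b;
         s * algebraMap F E c, 1 - s * algebraMap F E a] := by
  ext i j
  fin_cases i <;> fin_cases j <;> simp [sub_eq_add_neg]

theorem symmetricSpace_fiber_eq_image (h2 : (2 : F) ≠ 0) (hs0 : s ≠ 0)
    (hbasis : ∀ x : E, ∃ a b : F, x = algebraMap F E a + algebraMap F E b * s)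
    (hσ : σ s = -s) :
    {g : Matrix (Fin 2) (Fin 2) E | g.det = 1 ∧ g * g.map σ = 1 ∧ g.trace = 2} =
      (fun M : Matrix (Fin 2) (Fin 2) F => 1 + s • M.map (algebraMap F E)) ''
        {M | M.trace = 0 ∧ M * M = 0} := by
  ext g
  obtain ⟨N, rfl⟩ : ∃ N, g = 1 + N := ⟨g - 1, (add_sub_cancel 1 g).symm⟩
  simp only [Set.mem_ofPred_eq, Set.mem_image, symmetricSpace_fiber_one_add_iff,
    add_right_inj]
  constructor
  · rintro ⟨htr, hsq, hanti⟩
    obtain ⟨M, rfl⟩ := exists_eq_smul_map_of_map_eq_neg h2 hbasis hσ hanti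
    exact ⟨M, (trace_eq_zero_and_mul_self_eq_zero_smul_map_iff hs0 M).1 ⟨htr, hsq⟩, rfl⟩
  · rintro ⟨M, hM, rfl⟩
    obtain ⟨htr, hsq⟩ := (trace_eq_zero_and_mul_self_eq_zero_smul_map_iff hs0 M).2 hM
    exact ⟨htr, hsq, map_smul_map_algebraMap_eq_neg hσ M⟩

theorem injective_one_add_smul_map {n : Type*} [DecidableEq n] (hs0 : s ≠ 0) :
    Function.Injective (fun M : Matrix n n F => 1 + s • M.map (algebraMap F E)) :=
  fun _ _ h =>
    map_injective (algebraMap F E).injective (smul_right_injective _ hs0 (add_left_cancel h))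

end QuadraticExtension

theorem stmt9_general {F E : Type*} [Field F] [Field E] [Algebra F E]
    (h2 : (2 : F) ≠ 0)
    (s : E) (hs0 : s ≠ 0)
    (hbasis : ∀ x : E, ∃ a b : F, x = algebraMap F E a + algebraMap F E b * s)
    (σ : E ≃ₐ[F] E) (hσ : σ s = -s) :
    {g : Matrix (Fin 2) (Fin 2) E | g.det = 1 ∧ g * g.map σ = 1 ∧ g.trace = 2} =
      {g : Matrix (Fin 2) (Fin 2) E | ∃ a b c : F, a ^ 2 + b * c = 0 ∧
        g = !![1 + s * algebraMap F E a, s * algebraMap F E b;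
               s * algebraMap F E c, 1 - s * algebraMap F E a]} ∧
    Set.BijOn (fun M : Matrix (Fin 2) (Fin 2) F => 1 + s • M.map (algebraMap F E))
      {M : Matrix (Fin 2) (Fin 2) F | M.trace = 0 ∧ M * M = 0}
      {g : Matrix (Fin 2) (Fin 2) E | g.det = 1 ∧ g * g.map σ = 1 ∧ g.trace = 2} := by
  rw [symmetricSpace_fiber_eq_image h2 hs0 hbasis hσ]
  refine ⟨?_, (injective_one_add_smul_map hs0).injOn.bijOn_image⟩
  ext g
  simp only [Set.mem_image, Set.mem_ofPred_eq, trace_eq_zero_and_mul_self_eq_zero_fin_two_iff]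
  constructor
  · rintro ⟨M, ⟨a, b, c, habc, rfl⟩, rfl⟩
    exact ⟨a, b, c, habc, one_add_smul_map_of_fin_two a b c⟩
  · rintro ⟨a, b, c, habc, rfl⟩
    exact ⟨_, ⟨a, b, c, habc, rfl⟩, one_add_smul_map_of_fin_two a b c⟩

/-- The fiber `𝔬⁺ = {g ∈ X : tr g = 2}` of the symmetric space
`X = {g ∈ SL₂(E) : g·θ(g) = 1}` is exactly the set of matrices
`[[1+√τ a, √τ b],[√τ c, 1−√τ a]]` with `a² + bc = 0`, and `M ↦ 1 + √τ·M` is a bijection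
from the nilpotent cone of `𝔰𝔩₂(F)` onto `𝔬⁺`. -/
theorem stmt9 {F E : Type*} [Field F] [Field E] [Algebra F E]
    (h2 : (2 : F) ≠ 0) (τ : F) (hτ : ∀ a : F, a ^ 2 ≠ τ)
    (s : E) (hs : s ^ 2 = algebraMap F E τ) (hs0 : s ≠ 0)
    (hbasis : ∀ x : E, ∃ a b : F, x = algebraMap F E a + algebraMap F E b * s)
    (σ : E ≃ₐ[F] E) (hσ : σ s = -s) :
    {g : Matrix (Fin 2) (Fin 2) E | g.det = 1 ∧ g * g.map σ = 1 ∧ g.trace = 2} =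
      {g : Matrix (Fin 2) (Fin 2) E | ∃ a b c : F, a ^ 2 + b * c = 0 ∧
        g = !![1 + s * algebraMap F E a, s * algebraMap F E b;
               s * algebraMap F E c, 1 - s * algebraMap F E a]} ∧
    Set.BijOn (fun M : Matrix (Fin 2) (Fin 2) F => 1 + s • M.map (algebraMap F E))
      {M : Matrix (Fin 2) (Fin 2) F | M.trace = 0 ∧ M * M = 0}
      {g : Matrix (Fin 2) (Fin 2) E | g.det = 1 ∧ g * g.map σ = 1 ∧ g.trace = 2} :=
  stmt9_general h2 s hs0 hbasis σ hσ
end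

section
/- Let E = F(√τ) be a quadratic extension of a field F (char ≠ 2), θ entrywise conjugation on M₂(E), and let η = diag(x, x̄) ∈ SL₂(E) with xx̄ = 1, x = y/ȳ for y ∈ Eˣ, and γ = diag(y, y⁻¹). For n = [[1, √τ·a/(2yȳ)],[0,1]] with a ∈ F (so n·θ(n)⁻¹ has upper-right entry √τ·a/x up to the η factor), one has the exact identity κ_ε⁻¹(γ·n·θ(n)⁻¹·θ(γ)⁻¹) = κ_ε⁻¹(η) − √τ·[[0, 2aε/((ε−x)(ε−x̄))],[0,0]], whenever det(ε − η) = (ε−x)(ε−x̄) ≠ 0, where κ_ε⁻¹(g) = −(ε+g)(ε−g)⁻¹. -/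
/-!
The matrix `n` is `θ`-anti-invariant in its off-diagonal entry, so `θ(n)⁻¹ = n` and the twisted
conjugate `γ n θ(n)⁻¹ θ(γ)⁻¹ = γ n² θ(γ)⁻¹` is the upper-triangular
matrix `[[x, √τ·a], [0, x̄]]`.
For an upper-triangular `g = [[x, b], [0, x']]` the inverse Cayley transform is again
upper-triangular, with diagonal independent of `b` and upper-right entry `-2εb/((ε-x)(ε-x'))`.
-/

open Matrix

noncomputable def invCayley {n R : Type*} [Fintype n] [DecidableEq n] [CommRing R]
    (e : R) (g : Matrix n n R) : Matrix n n R :=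
  -((e • 1 + g) * (e • 1 - g)⁻¹)

lemma map_fin_two {R S : Type*} (f : R → S) (a b c d : R) :
    (!![a, b; c, d]).map f = !![f a, f b; f c, f d] := by
  ext i j; fin_cases i <;> fin_cases j <;> rfl

section FinTwo

variable {R K G : Type*} [CommRing R] [Field K]

lemma add_fin_two (a b c d a' b' c' d' : R) :
    !![a, b; c, d] + !![a', b'; c', d'] = !![a + a', b + b'; c + c', d + d'] := by
  ext i j; fin_cases i <;> fin_cases j <;> rfl

lemma sub_fin_two (a b c d a' b' c' d' : R) :
    !![a, b; c, d] - !![a', b'; c', d'] = !![a - a', b - b'; c - c', d - d'] := by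
  ext i j; fin_cases i <;> fin_cases j <;> rfl

lemma neg_fin_two (a b c d : R) : -!![a, b; c, d] = !![-a, -b; -c, -d] := by
  ext i j; fin_cases i <;> fin_cases j <;> rfl

lemma smul_fin_two (e a b c d : R) : e • !![a, b; c, d] = !![e * a, e * b; e * c, e * d] := by
  ext i j; fin_cases i <;> fin_cases j <;> rfl

lemma smul_one_fin_two (e : R) : e • (1 : Matrix (Fin 2) (Fin 2) R) = !![e, 0; 0, e] := by
  rw [one_fin_two, smul_fin_two, mul_one, mul_zero]

lemma inv_upper_fin_two {p r : K} (q : K) (hp : p ≠ 0) (hr : r ≠ 0) :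
    (!![p, q; 0, r])⁻¹ = !![p⁻¹, -q / (p * r); 0, r⁻¹] := by
  refine inv_eq_right_inv ?_
  rw [mul_fin_two, one_fin_two]
  congr <;> field_simp <;> ring

lemma invCayley_upper_fin_two {e x x' : K} (b : K) (hx : e - x ≠ 0) (hx' : e - x' ≠ 0) :
    invCayley e !![x, b; 0, x'] =
      !![-(e + x) / (e - x), -(2 * e * b) / ((e - x) * (e - x')); 0, -(e + x') / (e - x')] := by
  rw [invCayley, smul_one_fin_two, add_fin_two, sub_fin_two, sub_zero, zero_sub,
    inv_upper_fin_two _ hx hx', mul_fin_two, neg_fin_two]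
  congr <;> field_simp <;> ring

lemma invCayley_upper_fin_two_eq_sub {e x x' : K} (b : K) (hx : e - x ≠ 0) (hx' : e - x' ≠ 0) :
    invCayley e !![x, b; 0, x'] =
      invCayley e !![x, 0; 0, x'] - !![0, 2 * e * b / ((e - x) * (e - x')); 0, 0] := by
  rw [invCayley_upper_fin_two b hx hx', invCayley_upper_fin_two 0 hx hx', sub_fin_two]
  congr <;> ring

lemma unipotent_mul_map_inv [FunLike G R R] [RingHomClass G R R] (σ : G) {t : R}
    (ht : σ t = -t) :
    !![1, t; 0, 1] * (!![1, t; 0, 1].map σ)⁻¹ = !![1, 2 * t; 0, 1] := by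
  rw [map_fin_two, map_one, map_zero, ht]
  have hinv : (!![1, -t; 0, 1] : Matrix (Fin 2) (Fin 2) R)⁻¹ = !![1, t; 0, 1] :=
    inv_eq_right_inv (by rw [mul_fin_two, one_fin_two]; simp)
  rw [hinv, mul_fin_two]
  congr <;> ring

lemma diag_mul_unipotent_mul_map_inv [FunLike G K K] [RingHomClass G K K] (σ : G) {y : K}
    (hy : y ≠ 0) (u : K) :
    !![y, 0; 0, y⁻¹] * !![1, u; 0, 1] * (!![y, 0; 0, y⁻¹].map σ)⁻¹ =
      !![y / σ y, y * u * σ y; 0, σ y / y] := by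
  have hσy : σ y ≠ 0 := (map_ne_zero σ).2 hy
  rw [map_fin_two, map_zero, map_inv₀, inv_upper_fin_two _ hσy (inv_ne_zero hσy)]
  simp only [mul_fin_two]
  congr <;> field_simp <;> ring

end FinTwo

theorem stmt18_general {F E : Type*} [Field F] [Field E] [Algebra F E]
    (h2 : (2 : E) ≠ 0)
    (s : E)
    (σ : E ≃ₐ[F] E) (hσ : σ s = -s)
    (ε : F)
    (x y : E) (hy : y ≠ 0) (hnorm : x * σ x = 1) (hxy : x = y / σ y)
    (a : F)
    (hreg : (algebraMap F E ε - x) * (algebraMap F E ε - σ x) ≠ 0) :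
    -(((algebraMap F E ε) • (1 : Matrix (Fin 2) (Fin 2) E) +
        (!![y, 0; 0, y⁻¹] : Matrix (Fin 2) (Fin 2) E) *
          !![1, s * algebraMap F E a / (2 * (y * σ y)); 0, 1] *
          ((!![1, s * algebraMap F E a / (2 * (y * σ y)); 0, 1] :
              Matrix (Fin 2) (Fin 2) E).map σ)⁻¹ *
          (((!![y, 0; 0, y⁻¹] : Matrix (Fin 2) (Fin 2) E)).map σ)⁻¹) *
      ((algebraMap F E ε) • (1 : Matrix (Fin 2) (Fin 2) E) -
        (!![y, 0; 0, y⁻¹] : Matrix (Fin 2) (Fin 2) E) *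
          !![1, s * algebraMap F E a / (2 * (y * σ y)); 0, 1] *
          ((!![1, s * algebraMap F E a / (2 * (y * σ y)); 0, 1] :
              Matrix (Fin 2) (Fin 2) E).map σ)⁻¹ *
          (((!![y, 0; 0, y⁻¹] : Matrix (Fin 2) (Fin 2) E)).map σ)⁻¹)⁻¹) =
    -(((algebraMap F E ε) • (1 : Matrix (Fin 2) (Fin 2) E) +
        (!![x, 0; 0, σ x] : Matrix (Fin 2) (Fin 2) E)) *
      ((algebraMap F E ε) • (1 : Matrix (Fin 2) (Fin 2) E) -
        (!![x, 0; 0, σ x] : Matrix (Fin 2) (Fin 2) E))⁻¹) -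
    s • (!![0, 2 * algebraMap F E a * algebraMap F E ε /
          ((algebraMap F E ε - x) * (algebraMap F E ε - σ x)); 0, 0] :
        Matrix (Fin 2) (Fin 2) E) := by
  set e := algebraMap F E ε
  set A := algebraMap F E a
  set t := s * A / (2 * (y * σ y))
  have hσσy : σ (σ y) = y := by
    rw [hxy, map_div₀] at hnorm
    field_simp [(map_ne_zero σ).2 hy] at hnorm
    exact hnorm.symm
  have hσt : σ t = -t := by
    simp only [t, A, map_div₀, map_mul, hσ, AlgEquiv.commutes, hσσy, map_ofNat]
    ring
  have hconj : !![y, 0; 0, y⁻¹] * !![1, t; 0, 1] * (!![1, t; 0, 1].map σ)⁻¹ *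
      (!![y, 0; 0, y⁻¹].map σ)⁻¹ = !![x, s * A; 0, σ x] := by
    rw [mul_assoc _ !![1, t; 0, 1], unipotent_mul_map_inv σ hσt,
      diag_mul_unipotent_mul_map_inv σ hy, hxy, map_div₀, hσσy]
    congr 1
    simp only [t]
    field_simp [(map_ne_zero σ).2 hy]
  change invCayley e _ = invCayley e _ - _
  rw [hconj, invCayley_upper_fin_two_eq_sub _ (left_ne_zero_of_mul hreg)
    (right_ne_zero_of_mul hreg), smul_fin_two]
  congr <;> ring

/-- For `η = diag(x, x̄)` with `xx̄ = 1`, `x = y/ȳ`, `γ = diag(y, y⁻¹)`,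
`n = [[1, √τ·a/(2yȳ)],[0,1]]` and `(ε − x)(ε − x̄) ≠ 0`, the inverse Cayley transform
satisfies `κ_ε⁻¹(γ·n·θ(n)⁻¹·θ(γ)⁻¹) = κ_ε⁻¹(η) − √τ·[[0, 2aε/((ε−x)(ε−x̄))],[0,0]]`,
where `κ_ε⁻¹(g) = −(ε+g)(ε−g)⁻¹`. -/
theorem stmt18 {F E : Type*} [Field F] [Field E] [Algebra F E]
    (h2 : (2 : E) ≠ 0) (τ : F) (hτ : ∀ a : F, a ^ 2 ≠ τ)
    (s : E) (hs : s ^ 2 = algebraMap F E τ)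
    (σ : E ≃ₐ[F] E) (hσ : σ s = -s)
    (ε : F) (hε : ε = 1 ∨ ε = -1)
    (x y : E) (hy : y ≠ 0) (hnorm : x * σ x = 1) (hxy : x = y / σ y)
    (a : F)
    (hreg : (algebraMap F E ε - x) * (algebraMap F E ε - σ x) ≠ 0) :
    -(((algebraMap F E ε) • (1 : Matrix (Fin 2) (Fin 2) E) +
        (!![y, 0; 0, y⁻¹] : Matrix (Fin 2) (Fin 2) E) *
          !![1, s * algebraMap F E a / (2 * (y * σ y)); 0, 1] *
          ((!![1, s * algebraMap F E a / (2 * (y * σ y)); 0, 1] :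
              Matrix (Fin 2) (Fin 2) E).map σ)⁻¹ *
          (((!![y, 0; 0, y⁻¹] : Matrix (Fin 2) (Fin 2) E)).map σ)⁻¹) *
      ((algebraMap F E ε) • (1 : Matrix (Fin 2) (Fin 2) E) -
        (!![y, 0; 0, y⁻¹] : Matrix (Fin 2) (Fin 2) E) *
          !![1, s * algebraMap F E a / (2 * (y * σ y)); 0, 1] *
          ((!![1, s * algebraMap F E a / (2 * (y * σ y)); 0, 1] :
              Matrix (Fin 2) (Fin 2) E).map σ)⁻¹ *
          (((!![y, 0; 0, y⁻¹] : Matrix (Fin 2) (Fin 2) E)).map σ)⁻¹)⁻¹) =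
    -(((algebraMap F E ε) • (1 : Matrix (Fin 2) (Fin 2) E) +
        (!![x, 0; 0, σ x] : Matrix (Fin 2) (Fin 2) E)) *
      ((algebraMap F E ε) • (1 : Matrix (Fin 2) (Fin 2) E) -
        (!![x, 0; 0, σ x] : Matrix (Fin 2) (Fin 2) E))⁻¹) -
    s • (!![0, 2 * algebraMap F E a * algebraMap F E ε /
          ((algebraMap F E ε - x) * (algebraMap F E ε - σ x)); 0, 0] :
        Matrix (Fin 2) (Fin 2) E) :=
  stmt18_general h2 s σ hσ ε x y hy hnorm hxy a hreg
end

section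
/- Let E = F(√τ) (char F ≠ 2) with entrywise conjugation θ, and let η = diag(x, x̄) with xx̄ = 1 and x = y/ȳ. Let γ = diag(y, y⁻¹), and let N'(F) be the group of upper-unitriangular matrices in SL₂(F). Then the set {γ·n·θ(n)⁻¹·θ(γ)⁻¹ : n = [[1, √τ b],[0,1]], b ∈ F} equals {[[x, 2√τ b yȳ],[0,x̄]] : b ∈ F}, and the set {u·η·u⁻¹ : u ∈ N'(F)} of N'(F)-conjugates of η equals {[[x, a(x̄−x)],[0,x̄]] : a ∈ F}. These two sets coincide as subsets of M₂(E) if and only if x ≠ x̄, and in that case both are equal to {[[x,c],[0,x̄]] : c ∈ √τ·F}. -/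
open Matrix

section Aux

variable {F E : Type*} [Field F] [Field E] [Algebra F E]

lemma aux_map2 (σ : E ≃ₐ[F] E) (a b c d : E) :
    (!![a,b;c,d]).map σ = !![σ a, σ b; σ c, σ d] := by
  ext i j; fin_cases i <;> fin_cases j <;> simp

lemma aux_range_eq (x z : E) (g h : F → E)
    (h1 : ∀ b, ∃ a, g b = h a) (h2 : ∀ a, ∃ b, h a = g b) :
    Set.range (fun b : F => (!![x, g b; 0, z] : Matrix (Fin 2) (Fin 2) E)) =
      Set.range (fun a : F => (!![x, h a; 0, z] : Matrix (Fin 2) (Fin 2) E)) := by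
  ext M
  constructor
  · rintro ⟨b, rfl⟩
    obtain ⟨a, ha⟩ := h1 b
    exact ⟨a, show !![x, h a; 0, z] = !![x, g b; 0, z] by rw [ha]⟩
  · rintro ⟨a, rfl⟩
    obtain ⟨b, hb⟩ := h2 a
    exact ⟨b, show !![x, g b; 0, z] = !![x, h a; 0, z] by rw [hb]⟩

end Aux

/-- For `η = diag(x, x̄)` with `xx̄ = 1`, `x = y/ȳ`, the set of twisted
conjugates `γ·n·θ(n)⁻¹·θ(γ)⁻¹` over `n = [[1, √τ b],[0,1]]`, `b ∈ F`, equals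
`{[[x, 2√τ b yȳ],[0, x̄]] : b ∈ F}`; the set of `N'(F)`-conjugates of `η` equals
`{[[x, a(x̄ − x)],[0, x̄]] : a ∈ F}`; these two sets coincide iff `x ≠ x̄`, in which case
both equal `{[[x, √τ c],[0, x̄]] : c ∈ F}`. -/
theorem stmt19 {F E : Type*} [Field F] [Field E] [Algebra F E]
    (h2 : (2 : F) ≠ 0) (τ : F) (hτ : ∀ a : F, a ^ 2 ≠ τ)
    (s : E) (hs : s ^ 2 = algebraMap F E τ) (hs0 : s ≠ 0)
    (hbasis : ∀ x : E, ∃ a b : F, x = algebraMap F E a + algebraMap F E b * s)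
    (σ : E ≃ₐ[F] E) (hσ : σ s = -s)
    (x y : E) (hy : y ≠ 0) (hnorm : x * σ x = 1) (hxy : x = y / σ y) :
    (Set.range (fun b : F =>
        (!![y, 0; 0, y⁻¹] : Matrix (Fin 2) (Fin 2) E) *
          !![1, s * algebraMap F E b; 0, 1] *
          ((!![1, s * algebraMap F E b; 0, 1] : Matrix (Fin 2) (Fin 2) E).map σ)⁻¹ *
          (((!![y, 0; 0, y⁻¹] : Matrix (Fin 2) (Fin 2) E)).map σ)⁻¹) =
      Set.range (fun b : F =>
        (!![x, 2 * s * algebraMap F E b * (y * σ y); 0, σ x] : Matrix (Fin 2) (Fin 2) E))) ∧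
    (Set.range (fun a : F =>
        (!![1, algebraMap F E a; 0, 1] : Matrix (Fin 2) (Fin 2) E) *
          !![x, 0; 0, σ x] *
          (!![1, algebraMap F E a; 0, 1] : Matrix (Fin 2) (Fin 2) E)⁻¹) =
      Set.range (fun a : F =>
        (!![x, algebraMap F E a * (σ x - x); 0, σ x] : Matrix (Fin 2) (Fin 2) E))) ∧
    ((Set.range (fun b : F =>
        (!![y, 0; 0, y⁻¹] : Matrix (Fin 2) (Fin 2) E) *
          !![1, s * algebraMap F E b; 0, 1] *
          ((!![1, s * algebraMap F E b; 0, 1] : Matrix (Fin 2) (Fin 2) E).map σ)⁻¹ *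
          (((!![y, 0; 0, y⁻¹] : Matrix (Fin 2) (Fin 2) E)).map σ)⁻¹) =
      Set.range (fun a : F =>
        (!![1, algebraMap F E a; 0, 1] : Matrix (Fin 2) (Fin 2) E) *
          !![x, 0; 0, σ x] *
          (!![1, algebraMap F E a; 0, 1] : Matrix (Fin 2) (Fin 2) E)⁻¹)) ↔ x ≠ σ x) ∧
    (x ≠ σ x →
      Set.range (fun b : F =>
        (!![y, 0; 0, y⁻¹] : Matrix (Fin 2) (Fin 2) E) *
          !![1, s * algebraMap F E b; 0, 1] *
          ((!![1, s * algebraMap F E b; 0, 1] : Matrix (Fin 2) (Fin 2) E).map σ)⁻¹ *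
          (((!![y, 0; 0, y⁻¹] : Matrix (Fin 2) (Fin 2) E)).map σ)⁻¹) =
        Set.range (fun c : F =>
          (!![x, s * algebraMap F E c; 0, σ x] : Matrix (Fin 2) (Fin 2) E))) := by
  set K := algebraMap F E with hK
  have hKinj : Function.Injective K := (algebraMap F E).injective
  have h2E : (K 2 : E) ≠ 0 := fun h => h2 (hKinj (by rw [h, map_zero]))
  have hσK : ∀ a : F, σ (K a) = K a := fun a => σ.commutes a
  have hσ2 : ∀ z : E, σ (σ z) = z := by
    intro z
    obtain ⟨a, b, rfl⟩ := hbasis z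
    simp only [_root_.map_add, _root_.map_mul, hσK, hσ, _root_.map_neg, neg_neg]
  have hsy : σ y ≠ 0 := fun h => hy (by simpa using σ.injective (h.trans (map_zero σ).symm))
  have hx0 : x ≠ 0 := fun h => by simp [h] at hnorm
  have hsx0 : σ x ≠ 0 := fun h => by simp [h] at hnorm
  have hsxy : σ x = σ y / y := by rw [hxy, map_div₀, hσ2]
  -- decompose x
  obtain ⟨p, q, hpq⟩ := hbasis x
  have hσx : σ x = K p - K q * s := by
    rw [hpq, _root_.map_add, _root_.map_mul, hσK, hσK, hσ, mul_neg, sub_eq_add_neg]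
  -- y * σ y lies in F
  obtain ⟨c, d, hcd⟩ := hbasis (y * σ y)
  have hd0 : d = 0 := by
    have h1 : σ (y * σ y) = y * σ y := by rw [_root_.map_mul, hσ2, mul_comm]
    rw [hcd, _root_.map_add, _root_.map_mul, hσK, hσK, hσ, mul_neg] at h1
    have h2E' : (2 : E) ≠ 0 := fun h => h2E (by rw [map_ofNat]; exact h)
    have h3 : (2 : E) * (K d * s) = 0 := by linear_combination -h1
    rcases mul_eq_zero.1 ((mul_eq_zero.1 h3).resolve_left h2E') with h | h
    · exact hKinj (by rw [h, map_zero])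
    · exact absurd h hs0
  have hyc : y * σ y = K c := by rw [hcd, hd0, map_zero, zero_mul, add_zero]
  have hc0 : c ≠ 0 := by
    intro h
    rw [h, map_zero, mul_eq_zero] at hyc
    tauto
  have h2E' : (2 : E) ≠ 0 := fun h => h2E (by rw [map_ofNat]; exact h)
  have hc0E : K c ≠ 0 := fun h => hc0 (hKinj (h.trans (map_zero K).symm))
  -- simplify the twisted-conjugation function
  have hfun1 : (fun b : F =>
      (!![y, 0; 0, y⁻¹] : Matrix (Fin 2) (Fin 2) E) *
        !![1, s * K b; 0, 1] *
        ((!![1, s * K b; 0, 1] : Matrix (Fin 2) (Fin 2) E).map σ)⁻¹ *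
        (((!![y, 0; 0, y⁻¹] : Matrix (Fin 2) (Fin 2) E)).map σ)⁻¹) =
      (fun b : F => (!![x, 2 * s * K b * (y * σ y); 0, σ x] : Matrix (Fin 2) (Fin 2) E)) := by
    funext b
    have hm1 : ((!![1, s * K b; 0, 1] : Matrix (Fin 2) (Fin 2) E).map σ)⁻¹ =
        !![1, s * K b; 0, 1] := by
      rw [aux_map2]
      apply Matrix.inv_eq_right_inv
      simp [hσ, hσK, Matrix.mul_fin_two, ← Matrix.one_fin_two]
    have hm2 : (((!![y, 0; 0, y⁻¹] : Matrix (Fin 2) (Fin 2) E)).map σ)⁻¹ =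
        !![(σ y)⁻¹, 0; 0, σ y] := by
      rw [aux_map2]
      apply Matrix.inv_eq_right_inv
      simp [map_inv₀, Matrix.mul_fin_two, mul_inv_cancel₀ hsy, inv_mul_cancel₀ hsy,
        ← Matrix.one_fin_two]
    rw [hm1, hm2, Matrix.mul_fin_two, Matrix.mul_fin_two, Matrix.mul_fin_two]
    ext i j
    fin_cases i <;> fin_cases j <;>
      simp only [Matrix.cons_val', Matrix.cons_val_zero, Matrix.cons_val_one, Matrix.head_cons,
        Matrix.empty_val', Matrix.cons_val_fin_one, Matrix.head_fin_const, Fin.isValue,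
        Fin.mk_zero, Fin.mk_one, Matrix.of_apply]
    · field_simp [hxy]
      have hyx : σ y * x = y := by rw [hxy]; field_simp
      rw [hyx]; ring
    · field_simp; ring
    · simp
    · rw [hsxy]; field_simp; ring
  have hfun2 : (fun a : F =>
      (!![1, K a; 0, 1] : Matrix (Fin 2) (Fin 2) E) * !![x, 0; 0, σ x] *
        (!![1, K a; 0, 1] : Matrix (Fin 2) (Fin 2) E)⁻¹) =
      (fun a : F => (!![x, K a * (σ x - x); 0, σ x] : Matrix (Fin 2) (Fin 2) E)) := by
    funext a
    have hm1 : (!![1, K a; 0, 1] : Matrix (Fin 2) (Fin 2) E)⁻¹ = !![1, -(K a); 0, 1] := by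
      apply Matrix.inv_eq_right_inv
      simp [Matrix.mul_fin_two, ← Matrix.one_fin_two]
    rw [hm1, Matrix.mul_fin_two, Matrix.mul_fin_two]
    ext i j
    fin_cases i <;> fin_cases j <;>
      simp only [Matrix.cons_val', Matrix.cons_val_zero, Matrix.cons_val_one, Matrix.head_cons,
        Matrix.empty_val', Matrix.cons_val_fin_one, Matrix.head_fin_const, Fin.isValue,
        Fin.mk_zero, Fin.mk_one] <;> ring
  refine ⟨by rw [hfun1], by rw [hfun2], ?_, ?_⟩
  · rw [hfun1, hfun2]
    constructor
    · intro hset hxx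
      have hq0 : σ x - x = 0 := by rw [← hxx, sub_self]
      have h1 : (!![x, 2 * s * K 1 * (y * σ y); 0, σ x] : Matrix (Fin 2) (Fin 2) E) ∈
          Set.range (fun a : F => (!![x, K a * (σ x - x); 0, σ x] : Matrix (Fin 2) (Fin 2) E)) := by
        rw [← hset]; exact ⟨1, rfl⟩
      obtain ⟨a, ha⟩ := h1
      have hent : K a * (σ x - x) = 2 * s * K 1 * (y * σ y) := by
        have := congrFun (congrFun ha 0) 1
        simpa using this
      rw [hq0, mul_zero] at hent
      have : (2 : E) * s * K 1 * (y * σ y) = 0 := hent.symm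
      have h2' : (2 : E) = K 2 := by rw [map_ofNat]
      rw [_root_.map_one, mul_one] at this
      rcases mul_eq_zero.1 this with h | h
      · rcases mul_eq_zero.1 h with h | h
        · exact h2E (by rw [← h2', h])
        · exact hs0 h
      · rcases mul_eq_zero.1 h with h | h
        · exact hy h
        · exact hsy h
    · intro hxx
      have hq0 : q ≠ 0 := by
        intro h
        apply hxx
        rw [hσx, hpq, h]
        simp
      have hq0E : K q ≠ 0 := fun h => hq0 (hKinj (h.trans (map_zero K).symm))
      have hqs : σ x - x = -(2 * K q * s) := by rw [hσx, hpq]; ring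
      apply aux_range_eq
      · intro b
        refine ⟨-(b * c) / q, ?_⟩
        rw [hqs, hyc, map_div₀, _root_.map_neg, _root_.map_mul]
        field_simp
      · intro a
        refine ⟨-(a * q) / c, ?_⟩
        rw [hqs, hyc, map_div₀, _root_.map_neg, _root_.map_mul]
        field_simp [hc0E]
  · intro hxx
    rw [hfun1]
    apply aux_range_eq
    · intro b
      exact ⟨2 * b * c, by rw [hyc]; push_cast [_root_.map_mul, map_ofNat]; ring⟩
    · intro cc
      refine ⟨cc / (2 * c), ?_⟩
      rw [hyc, map_div₀, _root_.map_mul, map_ofNat]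
      field_simp
end
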